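/- arXiv:math/0408094 — 3 statements merged into one kernel-verified Lean document; each statement's English description precedes it below -/
import Mathlib

section
/- Let H be a Hopf algebra over a field k with bijective antipode S, and let X be a left H-module/comodule satisfying the anti-Yetter-Drinfeld condition. Then x_(-1)·x_(0) = x for all x ∈ X if and only if S(x_(-1))·x_(0) = x for all x ∈ X. -/
/-!
Write `T_f y = f(y₍₋₁₎) • y₍₀₎`. The anti-Yetter-Drinfeld condition makes `T_id` and `T_S`
`H`-linear, since `h₁ c S⁻¹(h₃) h₂ = h c` and `S(h₁ c S⁻¹(h₃)) h₂ = h₃ S(c) S(h₁) h₂ = h S(c)`.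
For `H`-linear `T_ψ`, coassociativity gives `T_ψ (T_φ y) = φ(y₍₋₂₎) ψ(y₍₋₁₎) • y₍₀₎`, so
`T_S ∘ T_id` and `T_id ∘ T_S` are `T` of the convolution products `id ⋆ S = S ⋆ id = η ε`, which
is the identity by the counit axiom. Hence `T_id` and `T_S` are mutually inverse, and one of them
is the identity iff the other one is.
-/

open TensorProduct PiTensorProduct

noncomputable section

variable (k : Type*) [Field k]

/-- The `k`-linear map `H ⊗ H^{⊗n} → H^{⊗(n+1)}` prepending a tensor factor. -/
def consT (H : Type*) [AddCommGroup H] [Module k H] (n : ℕ) :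
    H ⊗[k] (PiTensorProduct k fun _ : Fin n => H) →ₗ[k]
      PiTensorProduct k fun _ : Fin (n+1) => H :=
  TensorProduct.lift
    (PiTensorProduct.lift.toLinearMap ∘ₗ
      (multilinearCurryLeftEquiv k (fun _ : Fin (n+1) => H)
        (PiTensorProduct k fun _ : Fin (n+1) => H)) (PiTensorProduct.tprod k))

/-- Iterated comultiplication `Δ^{(n)} : H → H^{⊗(n+1)}`, with `n+1` Sweedler legs. -/
def itComul (H : Type*) [AddCommGroup H] [Module k H] [CoalgebraStruct k H] :
    (n : ℕ) → H →ₗ[k] PiTensorProduct k fun _ : Fin (n+1) => H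
  | 0 =>
      letI : Subsingleton (Fin 1) := ⟨fun a b => Fin.ext (by omega)⟩
      (PiTensorProduct.subsingletonEquiv (R := k) (s := fun _ : Fin 1 => H) (0 : Fin 1)).symm.toLinearMap
  | n+1 => consT k H (n+1) ∘ₗ
      TensorProduct.map LinearMap.id (itComul H n) ∘ₗ Coalgebra.comul

/-- Iterated coaction `Y → H^{⊗n} ⊗ Y` of a left `H`-comodule. -/
def itCoact (H Y : Type*) [AddCommGroup H] [Module k H]
    [AddCommGroup Y] [Module k Y] (ρ : Y →ₗ[k] H ⊗[k] Y) :
    (n : ℕ) → Y →ₗ[k] (PiTensorProduct k fun _ : Fin n => H) ⊗[k] Y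
  | 0 =>
      TensorProduct.map
        ((PiTensorProduct.isEmptyEquiv (Fin 0)).symm.toLinearMap) LinearMap.id ∘ₗ
        (TensorProduct.lid k Y).symm.toLinearMap
  | n+1 =>
      TensorProduct.map (consT k H n) LinearMap.id ∘ₗ
        (TensorProduct.assoc k H (PiTensorProduct k fun _ : Fin n => H) Y).symm.toLinearMap ∘ₗ
        TensorProduct.map LinearMap.id (itCoact H Y ρ n) ∘ₗ ρ

open Coalgebra HopfAlgebra

section Comodule

variable {R H Y : Type*} [CommSemiring R] [Semiring H] [Bialgebra R H]
  [AddCommMonoid Y] [Module R Y] [Module H Y] [IsScalarTower R H Y]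

variable (R H Y) in
def actionMap : H ⊗[R] Y →ₗ[R] Y := TensorProduct.lift (Algebra.lsmul R R Y).toLinearMap

@[simp]
lemma actionMap_tmul (h : H) (y : Y) : actionMap R H Y (h ⊗ₜ y) = h • y := rfl

/-- `y ↦ f(y₍₋₁₎) • y₍₀₎` in Sweedler notation. -/
def coactionSmul (ρ : Y →ₗ[R] H ⊗[R] Y) (f : H →ₗ[R] H) : Y →ₗ[R] Y :=
  actionMap R H Y ∘ₗ f.rTensor Y ∘ₗ ρ

variable {ρ : Y →ₗ[R] H ⊗[R] Y}

lemma coactionSmul_apply_of_eq_sum (f : H →ₗ[R] H) {y : Y} {ι : Type*} {s : Finset ι}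
    {a : ι → H} {b : ι → Y} (hy : ρ y = ∑ i ∈ s, a i ⊗ₜ b i) :
    coactionSmul ρ f y = ∑ i ∈ s, f (a i) • b i := by
  simp [coactionSmul, hy, map_sum]

lemma forall_sum_smul_eq_iff_coactionSmul_eq_id (f : H →ₗ[R] H) :
    (∀ (y : Y) (m : ℕ) (a : Fin m → H) (b : Fin m → Y),
      ρ y = ∑ i, a i ⊗ₜ[R] b i → ∑ i, f (a i) • b i = y) ↔ coactionSmul ρ f = LinearMap.id := by
  refine ⟨fun h => LinearMap.ext fun y => ?_, fun h y m a b hy => ?_⟩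
  · obtain ⟨m, a, b, hy⟩ := TensorProduct.exists_sum_tmul_eq (ρ y)
    rw [coactionSmul_apply_of_eq_sum f hy, h y m a b hy, LinearMap.id_apply]
  · rw [← coactionSmul_apply_of_eq_sum f hy, h, LinearMap.id_apply]

lemma comp_coactionSmul {F : Y →ₗ[R] Y} (hF : ∀ (h : H) (y : Y), F (h • y) = h • F y)
    (φ : H →ₗ[R] H) :
    F ∘ₗ coactionSmul ρ φ = actionMap R H Y ∘ₗ TensorProduct.map φ F ∘ₗ ρ := by
  have hF_act : F ∘ₗ actionMap R H Y = actionMap R H Y ∘ₗ F.lTensor H := by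
    ext h y
    simp [hF]
  rw [coactionSmul, ← LinearMap.comp_assoc, hF_act, ← LinearMap.lTensor_comp_rTensor]
  rfl

lemma actionMap_comp_map_coactionSmul
    (hcoassoc : (TensorProduct.assoc R H H Y).toLinearMap ∘ₗ
        TensorProduct.map comul LinearMap.id ∘ₗ ρ = TensorProduct.map LinearMap.id ρ ∘ₗ ρ)
    (φ ψ : H →ₗ[R] H) :
    actionMap R H Y ∘ₗ TensorProduct.map φ (coactionSmul ρ ψ) ∘ₗ ρ =
      coactionSmul ρ (LinearMap.mul' R H ∘ₗ TensorProduct.map φ ψ ∘ₗ comul) := by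
  have hact : actionMap R H Y ∘ₗ TensorProduct.map φ (actionMap R H Y ∘ₗ ψ.rTensor Y) ∘ₗ
      (TensorProduct.assoc R H H Y).toLinearMap =
      actionMap R H Y ∘ₗ (LinearMap.mul' R H ∘ₗ TensorProduct.map φ ψ).rTensor Y := by
    ext u v y
    simp [mul_smul]
  ext y
  have hy := LinearMap.congr_fun hcoassoc y
  simp only [LinearMap.comp_apply, LinearEquiv.coe_coe] at hy
  calc actionMap R H Y (TensorProduct.map φ (coactionSmul ρ ψ) (ρ y))
      = actionMap R H Y (TensorProduct.map φ (actionMap R H Y ∘ₗ ψ.rTensor Y)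
          (TensorProduct.map LinearMap.id ρ (ρ y))) := by
        rw [TensorProduct.map_map]
        rfl
    _ = actionMap R H Y ((LinearMap.mul' R H ∘ₗ TensorProduct.map φ ψ).rTensor Y
          (comul.rTensor Y (ρ y))) := by
        rw [← hy]
        exact LinearMap.congr_fun hact _
    _ = _ := by
        rw [← LinearMap.rTensor_comp_apply]
        rfl

lemma coactionSmul_algebraMap_comp_counit
    (hcounit : (TensorProduct.lid R Y).toLinearMap ∘ₗ
        TensorProduct.map counit LinearMap.id ∘ₗ ρ = LinearMap.id) :
    coactionSmul ρ (Algebra.linearMap R H ∘ₗ counit (R := R) (A := H)) = LinearMap.id := by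
  have hact : actionMap R H Y ∘ₗ (Algebra.linearMap R H ∘ₗ counit (R := R) (A := H)).rTensor Y =
      (TensorProduct.lid R Y).toLinearMap ∘ₗ TensorProduct.map counit LinearMap.id := by
    ext h y
    simp [algebraMap_smul]
  rw [coactionSmul, ← LinearMap.comp_assoc, hact, LinearMap.comp_assoc, hcounit]

lemma coactionSmul_comp_coactionSmul_eq_id
    (hcoassoc : (TensorProduct.assoc R H H Y).toLinearMap ∘ₗ
        TensorProduct.map comul LinearMap.id ∘ₗ ρ = TensorProduct.map LinearMap.id ρ ∘ₗ ρ)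
    (hcounit : (TensorProduct.lid R Y).toLinearMap ∘ₗ
        TensorProduct.map counit LinearMap.id ∘ₗ ρ = LinearMap.id)
    {φ ψ : H →ₗ[R] H} (hψ : ∀ (h : H) (y : Y), coactionSmul ρ ψ (h • y) = h • coactionSmul ρ ψ y)
    (hφψ : LinearMap.mul' R H ∘ₗ TensorProduct.map φ ψ ∘ₗ comul =
      Algebra.linearMap R H ∘ₗ counit) :
    coactionSmul ρ ψ ∘ₗ coactionSmul ρ φ = LinearMap.id := by
  rw [comp_coactionSmul hψ, actionMap_comp_map_coactionSmul hcoassoc, hφψ,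
    coactionSmul_algebraMap_comp_counit hcounit]

end Comodule

section Coalgebra

variable {R A : Type*} [CommSemiring R] [AddCommMonoid A] [Module R A] [Coalgebra R A]
  {a : A} {ι : Type*}

lemma sum_counit_right_smul (repr : Repr R a ι) :
    ∑ i ∈ repr.index, counit (R := R) (repr.right i) • repr.left i = a := by
  have h := congr(TensorProduct.rid R A $(sum_tmul_counit_eq repr))
  simpa only [map_sum, TensorProduct.rid_tmul, one_smul] using h

lemma sum_tmul_tmul_eq_lTensor_comul_comul {κ : ι → Type*} (repr : Repr R a ι)
    (a₂ : (i : ι) → Repr R (repr.right i) (κ i)) :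
    ∑ i ∈ repr.index, ∑ j ∈ (a₂ i).index,
      repr.left i ⊗ₜ[R] ((a₂ i).left j ⊗ₜ[R] (a₂ i).right j) = comul.lTensor A (comul a) := by
  rw [← repr.eq, map_sum]
  refine Finset.sum_congr rfl fun i _ => ?_
  rw [LinearMap.lTensor_tmul, ← (a₂ i).eq, TensorProduct.tmul_sum]

end Coalgebra

section Hopf

variable {R A : Type*} [CommSemiring R] [Semiring A] [HopfAlgebra R A] {a : A} {ι : Type*}
  {κ : ι → Type*}

lemma sum_antipodeInv_mul_eq_smul {Sinv : A →ₗ[R] A}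
    (hSinv₁ : Function.LeftInverse Sinv (antipode R))
    (hSinv₂ : Function.RightInverse Sinv (antipode R))
    (repr : Repr R a ι) :
    ∑ i ∈ repr.index, Sinv (repr.right i) * repr.left i = counit (R := R) a • 1 := by
  apply hSinv₁.injective
  simp only [map_sum, map_smul, antipode_one, antipode_mul_antidistrib, hSinv₂ _]
  exact sum_antipode_mul_eq_smul repr

lemma sum_mul_mul_antipodeInv_mul {Sinv : A →ₗ[R] A}
    (hSinv₁ : Function.LeftInverse Sinv (antipode R))
    (hSinv₂ : Function.RightInverse Sinv (antipode R))
    (repr : Repr R a ι) (a₂ : (i : ι) → Repr R (repr.right i) (κ i)) (c : A) :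
    ∑ i ∈ repr.index, ∑ j ∈ (a₂ i).index,
      repr.left i * c * (Sinv ((a₂ i).right j) * (a₂ i).left j) = a * c := by
  simp_rw [← Finset.mul_sum, sum_antipodeInv_mul_eq_smul hSinv₁ hSinv₂, mul_smul_comm, mul_one,
    ← smul_mul_assoc, ← Finset.sum_mul, sum_counit_right_smul]

lemma sum_mul_mul_antipode_mul (repr : Repr R a ι) (a₁ : (i : ι) → Repr R (repr.left i) (κ i))
    (c : A) :
    ∑ i ∈ repr.index, ∑ j ∈ (a₁ i).index,
      repr.right i * c * (antipode R ((a₁ i).left j) * (a₁ i).right j) = a * c := by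
  simp_rw [← Finset.mul_sum, sum_antipode_mul_eq_smul, mul_smul_comm, mul_one,
    ← smul_mul_assoc, ← Finset.sum_mul, sum_counit_smul]

end Hopf

lemma consT_tmul {H : Type*} [AddCommGroup H] [Module k H] (n : ℕ) (h : H) (f : Fin n → H) :
    consT k H n (h ⊗ₜ[k] PiTensorProduct.tprod k f) = PiTensorProduct.tprod k (Fin.cons h f) := by
  simp only [consT, multilinearCurryLeftEquiv, LinearEquiv.coe_mk, lift.tmul, LinearMap.coe_comp,
    LinearEquiv.coe_coe, Function.comp_apply, lift.tprod]
  rfl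

lemma itComul_zero_apply {H : Type*} [AddCommGroup H] [Module k H] [CoalgebraStruct k H]
    (h : H) : itComul k H 0 h = PiTensorProduct.tprod k ![h] := by
  have : ![h] = fun _ => h := by
    funext i
    fin_cases i
    rfl
  rw [this]
  exact PiTensorProduct.subsingletonEquiv_symm_apply' 0 h

lemma itComul_two_eq_sum {H : Type*} [AddCommGroup H] [Module k H] [CoalgebraStruct k H]
    {h : H} {α : Type*} {s : Finset α} {u v w : α → H}
    (hs : ∑ x ∈ s, u x ⊗ₜ[k] (v x ⊗ₜ[k] w x) = comul.lTensor H (comul (R := k) h)) :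
    itComul k H 2 h = ∑ x ∈ s, PiTensorProduct.tprod k ![u x, v x, w x] := by
  change (consT k H 2 ∘ₗ (consT k H 1 ∘ₗ (itComul k H 0).lTensor H ∘ₗ comul).lTensor H ∘ₗ
    comul) h = _
  simp only [LinearMap.lTensor_comp, LinearMap.comp_apply]
  rw [← hs]
  simp [map_sum, itComul_zero_apply, consT_tmul]

/-- `ρ(h • y) = h₁ y₍₋₁₎ S⁻¹(h₃) ⊗ h₂ • y₍₀₎`, read off arbitrary finite representations of
`ρ y` and of `Δ⁽²⁾ h`. -/
def IsAntiYetterDrinfeld {H Y : Type*} [Ring H] [HopfAlgebra k H] [AddCommGroup Y] [Module k Y]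
    [Module H Y] (Sinv : H →ₗ[k] H) (ρ : Y →ₗ[k] H ⊗[k] Y) : Prop :=
  ∀ (h : H) (y : Y) (m : ℕ) (a : Fin m → H) (b : Fin m → Y) (m' : ℕ) (g : Fin m' → Fin 3 → H),
    ρ y = ∑ i, a i ⊗ₜ[k] b i →
    itComul k H 2 h = ∑ i, PiTensorProduct.tprod k (g i) →
    ρ (h • y) = ∑ i, ∑ l, (g i 0 * a l * Sinv (g i 2)) ⊗ₜ[k] (g i 1 • b l)

namespace IsAntiYetterDrinfeld

variable {k} {H Y : Type*} [Ring H] [HopfAlgebra k H] [AddCommGroup Y] [Module k Y] [Module H Y]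
  {Sinv : H →ₗ[k] H} {ρ : Y →ₗ[k] H ⊗[k] Y}

lemma coaction_smul_eq_sum (haYD : IsAntiYetterDrinfeld k Sinv ρ) {h : H} {α : Type*}
    {s : Finset α} {u v w : α → H}
    (hs : ∑ x ∈ s, u x ⊗ₜ[k] (v x ⊗ₜ[k] w x) = comul.lTensor H (comul (R := k) h))
    {y : Y} {m : ℕ} {a : Fin m → H} {b : Fin m → Y} (hy : ρ y = ∑ l, a l ⊗ₜ[k] b l) :
    ρ (h • y) = ∑ x ∈ s, ∑ l, (u x * a l * Sinv (w x)) ⊗ₜ[k] (v x • b l) := by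
  have hcomul := itComul_two_eq_sum k hs
  rw [← Finset.sum_coe_sort s, ← s.equivFin.symm.sum_comp] at hcomul
  rw [haYD h y m a b _ _ hy hcomul, ← Finset.sum_coe_sort s, ← s.equivFin.symm.sum_comp]
  rfl

variable [IsScalarTower k H Y]

lemma coactionSmul_id_smul (haYD : IsAntiYetterDrinfeld k Sinv ρ)
    (hSinv₁ : Function.LeftInverse Sinv (antipode k))
    (hSinv₂ : Function.RightInverse Sinv (antipode k)) (h : H) (y : Y) :
    coactionSmul ρ LinearMap.id (h • y) = h • coactionSmul ρ LinearMap.id y := by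
  obtain ⟨m, a, b, hy⟩ := TensorProduct.exists_sum_tmul_eq (ρ y)
  let r := ℛ k h
  let r₂ := fun i => ℛ k (r.right i)
  have hs := sum_tmul_tmul_eq_lTensor_comul_comul r r₂
  rw [Finset.sum_sigma'] at hs
  simp only [coactionSmul, LinearMap.comp_apply, haYD.coaction_smul_eq_sum hs hy, hy, map_sum,
    LinearMap.rTensor_tmul, LinearMap.id_apply, actionMap_tmul, Finset.smul_sum, smul_smul]
  rw [Finset.sum_comm]
  refine Finset.sum_congr rfl fun l _ => ?_
  rw [← Finset.sum_smul, ← sum_mul_mul_antipodeInv_mul hSinv₁ hSinv₂ r r₂ (a l), Finset.sum_sigma']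
  simp only [mul_assoc]

lemma coactionSmul_antipode_smul (haYD : IsAntiYetterDrinfeld k Sinv ρ)
    (hSinv₂ : Function.RightInverse Sinv (antipode k)) (h : H) (y : Y) :
    coactionSmul ρ (antipode k) (h • y) = h • coactionSmul ρ (antipode k) y := by
  obtain ⟨m, a, b, hy⟩ := TensorProduct.exists_sum_tmul_eq (ρ y)
  let r := ℛ k h
  let r₁ := fun i => ℛ k (r.left i)
  have hs := (sum_tmul_tmul_eq r r₁ fun i => ℛ k (r.right i)).trans
    (sum_tmul_tmul_eq_lTensor_comul_comul r _)
  rw [Finset.sum_sigma'] at hs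
  simp only [coactionSmul, LinearMap.comp_apply, haYD.coaction_smul_eq_sum hs hy, hy, map_sum,
    LinearMap.rTensor_tmul, actionMap_tmul, Finset.smul_sum, smul_smul,
    antipode_mul_antidistrib, hSinv₂ _]
  rw [Finset.sum_comm]
  refine Finset.sum_congr rfl fun l _ => ?_
  rw [← Finset.sum_smul, ← sum_mul_mul_antipode_mul r r₁ (antipode k (a l)), Finset.sum_sigma']
  simp only [mul_assoc]

end IsAntiYetterDrinfeld

/-- for an anti-Yetter-Drinfeld module `X`, `x_(-1)·x_(0) = x` for all `x`
iff `S(x_(-1))·x_(0) = x` for all `x`. -/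
theorem statement6
    {H : Type*} [Ring H] [HopfAlgebra k H]
    (Sinv : H →ₗ[k] H)
    (hSinv₁ : ∀ h : H, Sinv (HopfAlgebra.antipode (R := k) h) = h)
    (hSinv₂ : ∀ h : H, HopfAlgebra.antipode (R := k) (Sinv h) = h)
    {Y : Type*} [AddCommGroup Y] [Module k Y] [Module H Y] [IsScalarTower k H Y]
    (ρ : Y →ₗ[k] H ⊗[k] Y)
    (hρ_coassoc :
      (TensorProduct.assoc k H H Y).toLinearMap ∘ₗ
        TensorProduct.map Coalgebra.comul LinearMap.id ∘ₗ ρ =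
      TensorProduct.map LinearMap.id ρ ∘ₗ ρ)
    (hρ_counit :
      (TensorProduct.lid k Y).toLinearMap ∘ₗ
        TensorProduct.map Coalgebra.counit LinearMap.id ∘ₗ ρ = LinearMap.id)
    (haYD : ∀ (h : H) (y : Y) (m : ℕ) (a : Fin m → H) (b : Fin m → Y)
      (m' : ℕ) (g : Fin m' → Fin 3 → H),
      ρ y = ∑ i, a i ⊗ₜ[k] b i →
      itComul k H 2 h = ∑ i, PiTensorProduct.tprod k (g i) →
      ρ (h • y) = ∑ i, ∑ l, (g i 0 * a l * Sinv (g i 2)) ⊗ₜ[k] (g i 1 • b l))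
 :
    (∀ (y : Y) (m : ℕ) (a : Fin m → H) (b : Fin m → Y),
      ρ y = ∑ i, a i ⊗ₜ[k] b i → ∑ i, a i • b i = y) ↔
    (∀ (y : Y) (m : ℕ) (a : Fin m → H) (b : Fin m → Y),
      ρ y = ∑ i, a i ⊗ₜ[k] b i →
      ∑ i, HopfAlgebra.antipode (R := k) (a i) • b i = y) := by
  have hS_comp_id : coactionSmul ρ (antipode k) ∘ₗ coactionSmul ρ LinearMap.id = LinearMap.id :=
    coactionSmul_comp_coactionSmul_eq_id hρ_coassoc hρ_counit
      (IsAntiYetterDrinfeld.coactionSmul_antipode_smul haYD hSinv₂)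
      (mul_antipode_lTensor_comul (R := k))
  have hid_comp_S : coactionSmul ρ LinearMap.id ∘ₗ coactionSmul ρ (antipode k) = LinearMap.id :=
    coactionSmul_comp_coactionSmul_eq_id hρ_coassoc hρ_counit
      (IsAntiYetterDrinfeld.coactionSmul_id_smul haYD hSinv₁ hSinv₂)
      (mul_antipode_rTensor_comul (R := k))
  refine (forall_sum_smul_eq_iff_coactionSmul_eq_id LinearMap.id).trans <|
    Iff.trans ?_ (forall_sum_smul_eq_iff_coactionSmul_eq_id (antipode k)).symm
  exact ⟨fun h => by rwa [h, LinearMap.comp_id] at hS_comp_id,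
    fun h => by rwa [h, LinearMap.comp_id] at hid_comp_S⟩
end
end

section
/- Let k be a field, H a Hopf algebra over k with bijective antipode S, and Y a left H-module/comodule that is 1-stable, i.e. S(y_(-1))·y_(0) = y for all y ∈ Y. Then p_n ∘ i_n = id on CM_n(H,Y) = H^{⊗n} ⊗ Y for every n ≥ 0; in particular each p_n is surjective. -/
open TensorProduct PiTensorProduct

noncomputable section

variable (k : Type*) [Field k]

/-!
Put `Ψ_n(h ⊗ y) := S(h_(n+1)) y_(-n) ⊗ ⋯ ⊗ S(h_(2)) y_(-1) ⊗ S(h_(1))·y_(0)`. Then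
`p_n(h^0 ⊗ ⋯ ⊗ h^n ⊗ y)` is `Ψ_n(h^n ⊗ y)` multiplied on the right by `h^0 ⊗ ⋯ ⊗ h^{n-1}`, so
`p_n(i_n(x ⊗ y)) = Ψ_n(y_(-1) ⊗ y_(0)) · x` and it suffices to show `Ψ_n(y_(-1) ⊗ y_(0)) = 1 ⊗ y`.
Splitting off the first leg gives `Ψ_{n+1}(h ⊗ y) = S(h_(2)) y_(-1) ⊗ Ψ_n(h_(1) ⊗ y_(0))`.
Evaluated at `y_(-1) ⊗ y_(0)`, coassociativity of the coaction and of `Δ` turn this into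
`S(c_(2)) c_(3) ⊗ Ψ_n(c_(1) ⊗ y_(0))` with `c = y_(-1)`; the antipode axiom collapses
`S(c_(2)) c_(3)` to `ε(c_(2))`, leaving `1 ⊗ Ψ_n(y_(-1) ⊗ y_(0))`. By induction everything comes
down to `Ψ_0(y_(-1) ⊗ y_(0)) = S(y_(-1))·y_(0)`, which is `y` by `1`-stability.
-/

namespace HopfModule

variable {k}

section TensorPowers

variable {H : Type*} [AddCommGroup H] [Module k H] {Y : Type*} [AddCommGroup Y] [Module k Y]

lemma exists_sum_tprod_eq {ι M : Type*} [Nonempty ι] [AddCommGroup M] [Module k M]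
    (x : ⨂[k] _ : ι, M) :
    ∃ (m : ℕ) (g : Fin m → ι → M), x = ∑ i, PiTensorProduct.tprod k (g i) := by
  classical
  induction x using PiTensorProduct.induction_on with
  | smul_tprod r f =>
    let i₀ := Classical.arbitrary ι
    exact ⟨1, fun _ => Function.update f i₀ (r • f i₀), by simp [MultilinearMap.map_update_smul]⟩
  | add x y hx hy =>
    obtain ⟨m, g, rfl⟩ := hx
    obtain ⟨m', g', rfl⟩ := hy
    exact ⟨m + m', Fin.addCases g g', by simp [Fin.sum_univ_add]⟩

lemma exists_sum_tprod_tmul_eq {ι M N : Type*} [Nonempty ι] [AddCommGroup M] [Module k M]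
    [AddCommGroup N] [Module k N] (x : (⨂[k] _ : ι, M) ⊗[k] N) :
    ∃ (m : ℕ) (c : Fin m → ι → M) (d : Fin m → N),
      x = ∑ i, PiTensorProduct.tprod k (c i) ⊗ₜ d i := by
  induction x using TensorProduct.induction_on with
  | zero => exact ⟨0, finZeroElim, finZeroElim, by simp⟩
  | tmul t d =>
    obtain ⟨m, c, rfl⟩ := exists_sum_tprod_eq t
    exact ⟨m, c, fun _ => d, TensorProduct.sum_tmul _ _ _⟩
  | add x y hx hy =>
    obtain ⟨m, c, d, rfl⟩ := hx
    obtain ⟨m', c', d', rfl⟩ := hy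
    exact ⟨m + m', Fin.addCases c c', Fin.addCases d d', by simp [Fin.sum_univ_add]⟩

@[simp] lemma consT_tprod (n : ℕ) (h : H) (f : Fin n → H) :
    consT k H n (h ⊗ₜ PiTensorProduct.tprod k f) = PiTensorProduct.tprod k (Fin.cons h f) := by
  simp only [consT, Nat.succ_eq_add_one, multilinearCurryLeftEquiv, LinearEquiv.coe_mk,
    TensorProduct.lift.tmul, LinearMap.coe_comp, LinearEquiv.coe_coe, Function.comp_apply,
    PiTensorProduct.lift.tprod]
  rfl

variable (k H) in
def snocT (n : ℕ) : (⨂[k] _ : Fin n, H) ⊗[k] H →ₗ[k] ⨂[k] _ : Fin (n+1), H :=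
  TensorProduct.lift
    (PiTensorProduct.lift (PiTensorProduct.tprod k (s := fun _ : Fin (n+1) => H)).curryRight)

@[simp] lemma snocT_tprod (n : ℕ) (f : Fin n → H) (h : H) :
    snocT k H n (PiTensorProduct.tprod k f ⊗ₜ h) = PiTensorProduct.tprod k (Fin.snoc f h) := by
  simp [snocT]

lemma consT_comp_lTensor_snocT (n : ℕ) :
    consT k H (n+1) ∘ₗ (snocT k H n).lTensor H =
      snocT k H (n+1) ∘ₗ (consT k H n).rTensor H ∘ₗ
        (TensorProduct.assoc k H _ H).symm.toLinearMap := by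
  ext h f x
  simp [Fin.cons_snoc_eq_snoc_cons]

variable (k H) in
def revSplit (n : ℕ) : (⨂[k] _ : Fin (n+1), H) →ₗ[k] (⨂[k] _ : Fin n, H) ⊗[k] H :=
  PiTensorProduct.lift
      ((TensorProduct.mk k _ H).compMultilinearMap (PiTensorProduct.tprod k)).uncurryRight ∘ₗ
    (PiTensorProduct.reindex k (fun _ => H) Fin.revPerm).toLinearMap

@[simp] lemma revSplit_tprod (n : ℕ) (g : Fin (n+1) → H) :
    revSplit k H n (PiTensorProduct.tprod k g) =
      PiTensorProduct.tprod k (fun j => g j.castSucc.rev) ⊗ₜ g 0 := by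
  simp only [revSplit, LinearMap.coe_comp, LinearEquiv.coe_coe, Function.comp_apply,
    PiTensorProduct.reindex_tprod, Fin.revPerm_symm, Fin.revPerm_apply, PiTensorProduct.lift.tprod,
    MultilinearMap.uncurryRight_apply, LinearMap.compMultilinearMap_apply, Fin.rev_last,
    TensorProduct.mk_apply]
  rfl

variable (k H Y) in
def consTensor (n : ℕ) :
    H ⊗[k] ((⨂[k] _ : Fin n, H) ⊗[k] Y) →ₗ[k] (⨂[k] _ : Fin (n+1), H) ⊗[k] Y :=
  (consT k H n).rTensor Y ∘ₗ (TensorProduct.assoc k H _ Y).symm.toLinearMap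

@[simp] lemma consTensor_tmul (n : ℕ) (h : H) (f : Fin n → H) (y : Y) :
    consTensor k H Y n (h ⊗ₜ (PiTensorProduct.tprod k f ⊗ₜ y)) =
      PiTensorProduct.tprod k (Fin.cons h f) ⊗ₜ y := by
  simp [consTensor]

lemma itCoact_succ (ρ : Y →ₗ[k] H ⊗[k] Y) (n : ℕ) :
    itCoact k H Y ρ (n+1) = consTensor k H Y n ∘ₗ (itCoact k H Y ρ n).lTensor H ∘ₗ ρ :=
  rfl

end TensorPowers

lemma tprod_fin_zero {A : Type*} [Ring A] [Algebra k A] (f : Fin 0 → A) :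
    PiTensorProduct.tprod k f = (1 : ⨂[k] _ : Fin 0, A) :=
  congrArg _ (Subsingleton.elim _ _)

section Coalgebra

open LinearMap

variable {H : Type*} [AddCommGroup H] [Module k H] [Coalgebra k H]

lemma itComul_succ_eq_snocT (n : ℕ) :
    itComul k H (n+1) = snocT k H (n+1) ∘ₗ (itComul k H n).rTensor H ∘ₗ Coalgebra.comul := by
  induction n with
  | zero =>
    have h₁ : consT k H 1 ∘ₗ (itComul k H 0).lTensor H =
        snocT k H 1 ∘ₗ (itComul k H 0).rTensor H := by
      ext a b
      simp only [itComul, AlgebraTensorModule.curry_apply, curry_apply, coe_restrictScalars,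
        comp_apply, lTensor_tmul, rTensor_tmul, LinearEquiv.coe_coe,
        PiTensorProduct.subsingletonEquiv_symm_apply, consT_tprod, snocT_tprod]
      congr 1
      ext j
      fin_cases j <;> rfl
    change consT k H 1 ∘ₗ (itComul k H 0).lTensor H ∘ₗ Coalgebra.comul = _
    rw [← comp_assoc, h₁, comp_assoc]
  | succ n ih =>
    calc itComul k H (n+2)
        = consT k H (n+2) ∘ₗ (itComul k H (n+1)).lTensor H ∘ₗ Coalgebra.comul := rfl
      _ = (consT k H (n+2) ∘ₗ (snocT k H (n+1)).lTensor H) ∘ₗ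
            ((itComul k H n).rTensor H).lTensor H ∘ₗ Coalgebra.comul.lTensor H ∘ₗ
              Coalgebra.comul := by
        simp only [ih, lTensor_comp, comp_assoc]
      _ = snocT k H (n+2) ∘ₗ (consT k H (n+1)).rTensor H ∘ₗ
            (((itComul k H n).lTensor H).rTensor H ∘ₗ
              (TensorProduct.assoc k H H H).symm.toLinearMap) ∘ₗ
            Coalgebra.comul.lTensor H ∘ₗ Coalgebra.comul := by
        rw [consT_comp_lTensor_snocT, rTensor_lTensor_comp_assoc_symm]
        simp only [comp_assoc]
      _ = snocT k H (n+2) ∘ₗ (itComul k H (n+1)).rTensor H ∘ₗ Coalgebra.comul := by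
        rw [comp_assoc, Coalgebra.coassoc_symm, itComul]
        simp only [rTensor_comp, comp_assoc]
        rfl

end Coalgebra

section Hopf

open LinearMap TensorProduct

variable {H : Type*} [Ring H] [HopfAlgebra k H]

variable (k H) in
def antipodeMul : H ⊗[k] H →ₗ[k] H :=
  LinearMap.mul' k H ∘ₗ (HopfAlgebra.antipode k).rTensor H

@[simp] lemma antipodeMul_tmul (a b : H) :
    antipodeMul k H (a ⊗ₜ b) = HopfAlgebra.antipode k a * b :=
  rfl

/-- In Sweedler notation: `S(c_(1)(2)) c_(2) ⊗ c_(1)(1) = 1 ⊗ c`. -/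
lemma rTensor_antipodeMul_comp_comul_comul :
    (antipodeMul k H).rTensor H ∘ₗ (TensorProduct.rightComm k H H H).toLinearMap ∘ₗ
        ((TensorProduct.comm k H H).toLinearMap ∘ₗ Coalgebra.comul).rTensor H ∘ₗ
        Coalgebra.comul =
      TensorProduct.mk k H H 1 := by
  have hswap : (TensorProduct.rightComm k H H H).toLinearMap ∘ₗ
      (TensorProduct.comm k H H).toLinearMap.rTensor H =
      (TensorProduct.comm k H (H ⊗[k] H)).toLinearMap ∘ₗ
        (TensorProduct.assoc k H H H).toLinearMap := by
    ext; rfl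
  have hcomm : (antipodeMul k H).rTensor H ∘ₗ (TensorProduct.comm k H (H ⊗[k] H)).toLinearMap =
      (TensorProduct.comm k H H).toLinearMap ∘ₗ (antipodeMul k H).lTensor H := by
    ext; rfl
  calc _ = (antipodeMul k H).rTensor H ∘ₗ
        ((TensorProduct.rightComm k H H H).toLinearMap ∘ₗ
          (TensorProduct.comm k H H).toLinearMap.rTensor H) ∘ₗ
        Coalgebra.comul.rTensor H ∘ₗ Coalgebra.comul := by
        simp only [rTensor_comp, comp_assoc]
    _ = (TensorProduct.comm k H H).toLinearMap ∘ₗ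
        (antipodeMul k H ∘ₗ Coalgebra.comul).lTensor H ∘ₗ Coalgebra.comul := by
        rw [hswap, comp_assoc, Coalgebra.coassoc, ← comp_assoc, hcomm]
        simp only [lTensor_comp, comp_assoc]
    _ = TensorProduct.mk k H H 1 := by
        rw [antipodeMul, comp_assoc, HopfAlgebra.mul_antipode_rTensor_comul, lTensor_comp,
          comp_assoc, Coalgebra.lTensor_counit_comp_comul]
        ext
        simp

/-- In Sweedler notation: `S(c_(1)(2)) c_(2) ⊗ (c_(1)(1) ⊗ m) = 1 ⊗ (c ⊗ m)`. -/
lemma rTensor_antipodeMul_comp_comul_comul_tensor (M : Type*) [AddCommGroup M] [Module k M] :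
    (antipodeMul k H).rTensor (H ⊗[k] M) ∘ₗ
        (TensorProduct.tensorTensorTensorComm k H H H M).toLinearMap ∘ₗ
        ((TensorProduct.comm k H H).toLinearMap ∘ₗ Coalgebra.comul).rTensor (H ⊗[k] M) ∘ₗ
        (TensorProduct.assoc k H H M).toLinearMap ∘ₗ Coalgebra.comul.rTensor M =
      TensorProduct.mk k H (H ⊗[k] M) 1 := by
  have hassoc :
      ((TensorProduct.comm k H H).toLinearMap ∘ₗ Coalgebra.comul).rTensor (H ⊗[k] M) ∘ₗ
        (TensorProduct.assoc k H H M).toLinearMap =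
      (TensorProduct.assoc k (H ⊗[k] H) H M).toLinearMap ∘ₗ
        (((TensorProduct.comm k H H).toLinearMap ∘ₗ Coalgebra.comul).rTensor H).rTensor M := by
    ext; rfl
  have hrearrange :
      (antipodeMul k H).rTensor (H ⊗[k] M) ∘ₗ
        (TensorProduct.tensorTensorTensorComm k H H H M).toLinearMap ∘ₗ
        (TensorProduct.assoc k (H ⊗[k] H) H M).toLinearMap =
      (TensorProduct.assoc k H H M).toLinearMap ∘ₗ
        ((antipodeMul k H).rTensor H ∘ₗ
          (TensorProduct.rightComm k H H H).toLinearMap).rTensor M := by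
    ext; rfl
  calc _ = ((antipodeMul k H).rTensor (H ⊗[k] M) ∘ₗ
        (TensorProduct.tensorTensorTensorComm k H H H M).toLinearMap ∘ₗ
        (TensorProduct.assoc k (H ⊗[k] H) H M).toLinearMap) ∘ₗ
        (((TensorProduct.comm k H H).toLinearMap ∘ₗ Coalgebra.comul).rTensor H).rTensor M ∘ₗ
        Coalgebra.comul.rTensor M := by
        rw [← comp_assoc (Coalgebra.comul.rTensor M) (TensorProduct.assoc k H H M).toLinearMap,
          hassoc]
        simp only [comp_assoc]
    _ = (TensorProduct.assoc k H H M).toLinearMap ∘ₗ (TensorProduct.mk k H H 1).rTensor M := by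
        rw [hrearrange, comp_assoc, ← rTensor_comp, ← rTensor_comp]
        simp only [comp_assoc, rTensor_antipodeMul_comp_comul_comul]
    _ = TensorProduct.mk k H (H ⊗[k] M) 1 := by
        ext; rfl

end Hopf

section TwistedCoaction

open LinearMap TensorProduct

variable {H : Type*} [Ring H] [HopfAlgebra k H]
  {Y : Type*} [AddCommGroup Y] [Module k Y] [Module H Y] [IsScalarTower k H Y]

variable (k H Y) in
def antipodeAct : H ⊗[k] Y →ₗ[k] Y :=
  TensorProduct.lift ((Algebra.lsmul k k Y).toLinearMap ∘ₗ HopfAlgebra.antipode k)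

@[simp] lemma antipodeAct_tmul (h : H) (y : Y) :
    antipodeAct k H Y (h ⊗ₜ y) = HopfAlgebra.antipode k h • y :=
  rfl

variable (k H Y) in
def pairLegs (n : ℕ) :
    (⨂[k] _ : Fin (n+1), H) ⊗[k] ((⨂[k] _ : Fin n, H) ⊗[k] Y) →ₗ[k]
      (⨂[k] _ : Fin n, H) ⊗[k] Y :=
  TensorProduct.map
      (LinearMap.mul' k _ ∘ₗ (PiTensorProduct.map fun _ => HopfAlgebra.antipode k).rTensor _)
      (antipodeAct k H Y) ∘ₗ
    (TensorProduct.tensorTensorTensorComm k _ H _ Y).toLinearMap ∘ₗ (revSplit k H n).rTensor _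

@[simp] lemma pairLegs_tmul (n : ℕ) (g : Fin (n+1) → H) (c : Fin n → H) (d : Y) :
    pairLegs k H Y n (PiTensorProduct.tprod k g ⊗ₜ (PiTensorProduct.tprod k c ⊗ₜ d)) =
      PiTensorProduct.tprod k (fun j => HopfAlgebra.antipode k (g j.castSucc.rev) * c j) ⊗ₜ
        (HopfAlgebra.antipode k (g 0) • d) := by
  simp only [pairLegs, coe_comp, LinearEquiv.coe_coe, Function.comp_apply, rTensor_tmul,
    revSplit_tprod, tensorTensorTensorComm_tmul, map_tmul, PiTensorProduct.map_tprod, mul'_apply,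
    PiTensorProduct.tprod_mul_tprod, antipodeAct_tmul]
  rfl

lemma pairLegs_succ_comp_map_snocT_consTensor (n : ℕ) :
    pairLegs k H Y (n+1) ∘ₗ TensorProduct.map (snocT k H (n+1)) (consTensor k H Y n) =
      consTensor k H Y n ∘ₗ TensorProduct.map (antipodeMul k H) (pairLegs k H Y n) ∘ₗ
        (TensorProduct.tensorTensorTensorComm k H _ H _).toLinearMap ∘ₗ
        (TensorProduct.comm k _ H).toLinearMap.rTensor _ := by
  ext g q u c d
  simp only [compMultilinearMap_apply, AlgebraTensorModule.curry_apply, restrictScalars_self,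
    curry_apply, coe_comp, Function.comp_apply, map_tmul, snocT_tprod, consTensor_tmul,
    pairLegs_tmul, Fin.snoc_apply_zero, LinearEquiv.coe_coe, rTensor_tmul, comm_tmul,
    tensorTensorTensorComm_tmul, antipodeMul_tmul]
  congr 1
  refine congrArg (PiTensorProduct.tprod k) (funext fun j => ?_)
  cases j using Fin.cases <;> simp [Fin.rev_succ]

/-- `twistedCoaction ρ n (h ⊗ y) = S(h_(n+1)) y_(-n) ⊗ ⋯ ⊗ S(h_(2)) y_(-1) ⊗ S(h_(1))·y_(0)`. -/
def twistedCoaction (ρ : Y →ₗ[k] H ⊗[k] Y) (n : ℕ) :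
    H ⊗[k] Y →ₗ[k] (⨂[k] _ : Fin n, H) ⊗[k] Y :=
  pairLegs k H Y n ∘ₗ TensorProduct.map (itComul k H n) (itCoact k H Y ρ n)

variable {ρ : Y →ₗ[k] H ⊗[k] Y}

lemma twistedCoaction_zero :
    twistedCoaction ρ 0 = TensorProduct.mk k _ Y 1 ∘ₗ antipodeAct k H Y := by
  ext h y
  simp only [twistedCoaction, itComul, itCoact, AlgebraTensorModule.curry_apply,
    restrictScalars_self, curry_apply, coe_comp, Function.comp_apply, map_tmul, LinearEquiv.coe_coe,
    PiTensorProduct.subsingletonEquiv_symm_apply', lid_symm_apply,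
    PiTensorProduct.isEmptyEquiv_symm_apply, one_smul, id_coe, id_eq, pairLegs_tmul,
    antipodeAct_tmul, mk_apply]
  rw [tprod_fin_zero]

lemma twistedCoaction_succ (n : ℕ) :
    twistedCoaction ρ (n+1) =
      consTensor k H Y n ∘ₗ TensorProduct.map (antipodeMul k H) (twistedCoaction ρ n) ∘ₗ
        (TensorProduct.tensorTensorTensorComm k H H H Y).toLinearMap ∘ₗ
        TensorProduct.map ((TensorProduct.comm k H H).toLinearMap ∘ₗ Coalgebra.comul) ρ := by
  have hstep : pairLegs k H Y (n+1) ∘ₗ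
      TensorProduct.map (snocT k H (n+1) ∘ₗ (itComul k H n).rTensor H)
        (consTensor k H Y n ∘ₗ (itCoact k H Y ρ n).lTensor H) =
      consTensor k H Y n ∘ₗ TensorProduct.map (antipodeMul k H) (twistedCoaction ρ n) ∘ₗ
        (TensorProduct.tensorTensorTensorComm k H H H Y).toLinearMap ∘ₗ
        (TensorProduct.comm k H H).toLinearMap.rTensor _ := by
    rw [TensorProduct.map_comp, ← comp_assoc, pairLegs_succ_comp_map_snocT_consTensor]
    ext a b u w
    simp [twistedCoaction]
  rw [twistedCoaction, itComul_succ_eq_snocT, itCoact_succ, ← comp_assoc Coalgebra.comul,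
    ← comp_assoc ρ, TensorProduct.map_comp, ← comp_assoc, hstep]
  simp only [comp_assoc, rTensor_comp_map]

lemma twistedCoaction_succ_comp_coaction
    (hρ : (TensorProduct.assoc k H H Y).toLinearMap ∘ₗ
        TensorProduct.map Coalgebra.comul LinearMap.id ∘ₗ ρ =
      TensorProduct.map LinearMap.id ρ ∘ₗ ρ)
    (n : ℕ) :
    twistedCoaction ρ (n+1) ∘ₗ ρ =
      consTensor k H Y n ∘ₗ TensorProduct.mk k H _ 1 ∘ₗ twistedCoaction ρ n ∘ₗ ρ := by
  have hρ' : ρ.lTensor H ∘ₗ ρ =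
      (TensorProduct.assoc k H H Y).toLinearMap ∘ₗ Coalgebra.comul.rTensor Y ∘ₗ ρ :=
    hρ.symm
  have hcancel := congrArg (· ∘ₗ ρ) (rTensor_antipodeMul_comp_comul_comul_tensor (H := H) Y)
  simp only [comp_assoc] at hcancel
  rw [twistedCoaction_succ, ← lTensor_comp_rTensor, ← rTensor_comp_lTensor]
  simp only [comp_assoc]
  rw [hρ', hcancel]
  ext y
  simp

lemma twistedCoaction_comp_coaction
    (hρ : (TensorProduct.assoc k H H Y).toLinearMap ∘ₗ
        TensorProduct.map Coalgebra.comul LinearMap.id ∘ₗ ρ =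
      TensorProduct.map LinearMap.id ρ ∘ₗ ρ)
    (hstab : antipodeAct k H Y ∘ₗ ρ = LinearMap.id) (n : ℕ) :
    twistedCoaction ρ n ∘ₗ ρ = TensorProduct.mk k _ Y 1 := by
  induction n with
  | zero => rw [twistedCoaction_zero, comp_assoc, hstab, comp_id]
  | succ n ih =>
    rw [twistedCoaction_succ_comp_coaction hρ, ih]
    ext y
    simp only [PiTensorProduct.one_def, coe_comp, Function.comp_apply, mk_apply, consTensor_tmul]
    exact congrArg (PiTensorProduct.tprod k · ⊗ₜ y) (Fin.cons_self_tail 1)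

lemma apply_tprod_snoc_tmul
    (p : (n : ℕ) →
      (PiTensorProduct k fun _ : Fin (n+1) => H) ⊗[k] Y →ₗ[k]
      (PiTensorProduct k fun _ : Fin n => H) ⊗[k] Y)
    (hp0 : ∀ (h : H) (y : Y),
      p 0 (PiTensorProduct.tprod k (fun _ : Fin 1 => h) ⊗ₜ[k] y) =
        (PiTensorProduct.isEmptyEquiv (Fin 0)).symm 1 ⊗ₜ[k]
          (HopfAlgebra.antipode (R := k) h • y))
    (hp : ∀ (n : ℕ) (f : Fin (n+2) → H) (y : Y)
      (m : ℕ) (g : Fin m → Fin (n+2) → H)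
      (m' : ℕ) (c : Fin m' → Fin (n+1) → H) (d : Fin m' → Y),
      itComul k H (n+1) (f (Fin.last (n+1))) = ∑ i, PiTensorProduct.tprod k (g i) →
      itCoact k H Y ρ (n+1) y = ∑ l, PiTensorProduct.tprod k (c l) ⊗ₜ[k] d l →
      p (n+1) (PiTensorProduct.tprod k f ⊗ₜ[k] y) =
        ∑ i, ∑ l, PiTensorProduct.tprod k
          (fun j : Fin (n+1) =>
            HopfAlgebra.antipode (R := k)
                (g i ⟨n + 1 - (j : ℕ), Nat.lt_succ_of_le (Nat.sub_le _ _)⟩) *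
              c l j * f j.castSucc) ⊗ₜ[k]
          (HopfAlgebra.antipode (R := k) (g i 0) • d l))
    (n : ℕ) (f : Fin n → H) (x : H) (z : Y) :
    p n (PiTensorProduct.tprod k (Fin.snoc f x) ⊗ₜ z) =
      (LinearMap.mulRight k (PiTensorProduct.tprod k f)).rTensor Y
        (twistedCoaction ρ n (x ⊗ₜ z)) := by
  cases n with
  | zero =>
    have hsnoc : (Fin.snoc f x : Fin 1 → H) = fun _ => x := funext fun j => by
      rw [show j = Fin.last 0 from Fin.ext (by omega), Fin.snoc_last]
    rw [hsnoc, hp0, twistedCoaction_zero]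
    simp [tprod_fin_zero]
  | succ n =>
    obtain ⟨m, g, hg⟩ := exists_sum_tprod_eq (itComul k H (n+1) x)
    obtain ⟨m', c, d, hcd⟩ := exists_sum_tprod_tmul_eq (itCoact k H Y ρ (n+1) z)
    rw [hp n _ z m g m' c d (by rw [Fin.snoc_last, hg]) hcd, twistedCoaction, comp_apply,
      map_tmul, hg, hcd]
    simp only [TensorProduct.sum_tmul, TensorProduct.tmul_sum, map_sum, pairLegs_tmul,
      rTensor_tmul, mulRight_apply, PiTensorProduct.tprod_mul_tprod]
    rw [Finset.sum_comm]
    refine Finset.sum_congr rfl fun i _ => Finset.sum_congr rfl fun l _ => ?_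
    have hrev : ∀ j : Fin (n+1),
        (⟨n + 1 - j, Nat.lt_succ_of_le (Nat.sub_le _ _)⟩ : Fin (n+2)) = j.castSucc.rev :=
      fun j => Fin.ext (by simp [Fin.val_rev])
    simp only [hrev, Fin.snoc_castSucc]
    rfl

end TwistedCoaction

end HopfModule

/-- if `Y` is `1`-stable then `p_n ∘ i_n = id`, so each `p_n` is surjective. -/
theorem statement7
    {H : Type*} [Ring H] [HopfAlgebra k H]
    {Y : Type*} [AddCommGroup Y] [Module k Y] [Module H Y] [IsScalarTower k H Y]
    (ρ : Y →ₗ[k] H ⊗[k] Y)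
    (hρ_coassoc :
      (TensorProduct.assoc k H H Y).toLinearMap ∘ₗ
        TensorProduct.map Coalgebra.comul LinearMap.id ∘ₗ ρ =
      TensorProduct.map LinearMap.id ρ ∘ₗ ρ)
    (hstab₁ : ∀ (y : Y) (m : ℕ) (a : Fin m → H) (b : Fin m → Y),
      ρ y = ∑ i, a i ⊗ₜ[k] b i →
      ∑ i, HopfAlgebra.antipode (R := k) (a i) • b i = y)
    (p : (n : ℕ) →
      (PiTensorProduct k fun _ : Fin (n+1) => H) ⊗[k] Y →ₗ[k]
      (PiTensorProduct k fun _ : Fin n => H) ⊗[k] Y)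
    (hp0 : ∀ (h : H) (y : Y),
      p 0 (PiTensorProduct.tprod k (fun _ : Fin 1 => h) ⊗ₜ[k] y) =
        (PiTensorProduct.isEmptyEquiv (Fin 0)).symm 1 ⊗ₜ[k]
          (HopfAlgebra.antipode (R := k) h • y))
    (hp : ∀ (n : ℕ) (f : Fin (n+2) → H) (y : Y)
      (m : ℕ) (g : Fin m → Fin (n+2) → H)
      (m' : ℕ) (c : Fin m' → Fin (n+1) → H) (d : Fin m' → Y),
      itComul k H (n+1) (f (Fin.last (n+1))) = ∑ i, PiTensorProduct.tprod k (g i) →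
      itCoact k H Y ρ (n+1) y = ∑ l, PiTensorProduct.tprod k (c l) ⊗ₜ[k] d l →
      p (n+1) (PiTensorProduct.tprod k f ⊗ₜ[k] y) =
        ∑ i, ∑ l, PiTensorProduct.tprod k
          (fun j : Fin (n+1) =>
            HopfAlgebra.antipode (R := k) (g i ⟨n + 1 - (j : ℕ), by omega⟩) *
              c l j * f j.castSucc) ⊗ₜ[k]
          (HopfAlgebra.antipode (R := k) (g i 0) • d l))
    (iT : (n : ℕ) →
      (PiTensorProduct k fun _ : Fin n => H) ⊗[k] Y →ₗ[k]
      (PiTensorProduct k fun _ : Fin (n+1) => H) ⊗[k] Y)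
    (hiT : ∀ (n : ℕ) (f : Fin n → H) (y : Y)
      (m' : ℕ) (c : Fin m' → H) (d : Fin m' → Y),
      ρ y = ∑ l, c l ⊗ₜ[k] d l →
      iT n (PiTensorProduct.tprod k f ⊗ₜ[k] y) =
        ∑ l, PiTensorProduct.tprod k (Fin.snoc f (c l)) ⊗ₜ[k] d l)
 :
    (∀ n : ℕ, p n ∘ₗ iT n = LinearMap.id) ∧
    (∀ n : ℕ, Function.Surjective (p n)) := by
  have hstab : HopfModule.antipodeAct k H Y ∘ₗ ρ = LinearMap.id := LinearMap.ext fun y => by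
    obtain ⟨m, a, b, hab⟩ := TensorProduct.exists_sum_tmul_eq (ρ y)
    simpa [hab] using hstab₁ y m a b hab
  have hpi : ∀ n, p n ∘ₗ iT n = LinearMap.id := fun n => by
    ext f y
    change p n (iT n (PiTensorProduct.tprod k f ⊗ₜ y)) = PiTensorProduct.tprod k f ⊗ₜ y
    obtain ⟨m, c, d, hcd⟩ := TensorProduct.exists_sum_tmul_eq (ρ y)
    have hΨ := LinearMap.congr_fun
      (HopfModule.twistedCoaction_comp_coaction hρ_coassoc hstab n) y
    rw [hiT n f y m c d hcd, map_sum]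
    simp_rw [HopfModule.apply_tprod_snoc_tmul p hp0 hp]
    rw [← map_sum, ← map_sum, ← hcd, ← LinearMap.comp_apply (HopfModule.twistedCoaction ρ n), hΨ]
    simp
  exact ⟨hpi, fun n x => ⟨iT n x, LinearMap.congr_fun (hpi n) x⟩⟩
end
end

section
/- Let H be a Hopf algebra over a field k with bijective antipode S, and let X and Y be left H-modules. Give X ⊗ Y the diagonal left H-action h·(x ⊗ y) := h_(1)·x ⊗ h_(2)·y, and let X^R be X regarded as a right H-module via x·h := S^{-1}(h)·x. Then the map x ⊗ y ↦ x ⊗_H y induces a k-linear isomorphism _H(X ⊗ Y) ≅ X^R ⊗_H Y, where _H(X ⊗ Y) := (X ⊗ Y)/span{ε(h)ζ − h·ζ : h ∈ H, ζ ∈ X ⊗ Y}. -/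
open TensorProduct PiTensorProduct

noncomputable section

variable (k : Type*) [Field k]

/-! The two spans of relations coincide, so the identity of `X ⊗ Y` descends to the
isomorphism. Since `S⁻¹(h₍₂₎) h₍₁₎ = ε(h)`, a coinvariance relation splits as
`ε(h) x ⊗ y - h₍₁₎x ⊗ h₍₂₎y = ∑ S⁻¹(h₍₂₎) • (h₍₁₎x) ⊗ y - h₍₁₎x ⊗ h₍₂₎y`, a sum of balancing
relations. Conversely, with `ζ = S⁻¹(h₍₁₎) x ⊗ y`, coassociativity and
`h₍₂₎ S⁻¹(h₍₁₎) = ε(h)` give `S⁻¹(h) x ⊗ y - x ⊗ h y = ∑ ε(h₍₂₎) ζ - h₍₂₎ · ζ`. -/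

open Coalgebra HopfAlgebra

lemma sum_counit_right_smul_s18 {R A ι : Type*} [CommSemiring R] [AddCommMonoid A]
    [Module R A] [Coalgebra R A] {a : A} (r : Repr R a ι) :
    ∑ i ∈ r.index, counit (R := R) (r.right i) • r.left i = a := by
  simpa only [map_sum, TensorProduct.rid_tmul, one_smul] using
    congr(TensorProduct.rid R A $(sum_tmul_counit_eq r))

section InverseAntipode

variable {R A ι : Type*} [CommSemiring R] [Semiring A] [HopfAlgebra R A] {Sinv : A →ₗ[R] A}
  {a : A}

lemma sum_inverseAntipode_mul (hl : Function.LeftInverse Sinv (antipode R))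
    (hr : Function.RightInverse Sinv (antipode R)) (r : Repr R a ι) :
    ∑ i ∈ r.index, Sinv (r.right i) * r.left i = counit (R := R) a • 1 := by
  apply hl.injective
  simp only [map_sum, map_smul, antipode_one, antipode_mul_antidistrib, hr _]
  exact sum_antipode_mul_eq_smul r

lemma sum_mul_inverseAntipode (hl : Function.LeftInverse Sinv (antipode R))
    (hr : Function.RightInverse Sinv (antipode R)) (r : Repr R a ι) :
    ∑ i ∈ r.index, r.right i * Sinv (r.left i) = counit (R := R) a • 1 := by
  apply hl.injective
  simp only [map_sum, map_smul, antipode_one, antipode_mul_antidistrib, hr _]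
  exact sum_mul_antipode_eq_smul r

/-- By coassociativity the left side is `a₍₁₎₍₂₎ S⁻¹(a₍₁₎₍₁₎) ⊗ a₍₂₎ = ε(a₍₁₎) ⊗ a₍₂₎`. -/
lemma sum_sum_mul_inverseAntipode_tmul {Λ : ι → Type*}
    (hl : Function.LeftInverse Sinv (antipode R)) (hr : Function.RightInverse Sinv (antipode R))
    (r : Repr R a ι) (r₂ : (i : ι) → Repr R (r.right i) (Λ i)) :
    ∑ i ∈ r.index, ∑ p ∈ (r₂ i).index, ((r₂ i).left p * Sinv (r.left i)) ⊗ₜ[R] (r₂ i).right p =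
      (1 : A) ⊗ₜ[R] a := by
  let T : A ⊗[R] (A ⊗[R] A) →ₗ[R] A ⊗[R] A :=
    (LinearMap.mul' R A ∘ₗ (TensorProduct.comm R A A).toLinearMap ∘ₗ Sinv.rTensor A).rTensor A ∘ₗ
      (TensorProduct.assoc R A A A).symm.toLinearMap
  have hT (α β γ : A) : T (α ⊗ₜ (β ⊗ₜ γ)) = (β * Sinv α) ⊗ₜ γ := rfl
  have coassoc := congr(T $(sum_tmul_tmul_eq r (fun i ↦ ℛ R (r.left i)) r₂))
  simp only [map_sum, hT] at coassoc
  rw [← coassoc]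
  simp only [← TensorProduct.sum_tmul, sum_mul_inverseAntipode hl hr, TensorProduct.smul_tmul,
    ← TensorProduct.tmul_sum, sum_counit_smul]

end InverseAntipode

section DiagonalAction

variable {R H X Y : Type*} [CommSemiring R] [Ring H] [HopfAlgebra R H]
  [AddCommGroup X] [Module R X] [Module H X] [AddCommGroup Y] [Module R Y] [Module H Y]

/-- `La h` is `x ⊗ y ↦ h₍₁₎ x ⊗ h₍₂₎ y`, for every way of writing `Δ h` as a `Fin m`-indexed sum. -/
def IsDiagonalAction (La : H → X ⊗[R] Y →ₗ[R] X ⊗[R] Y) : Prop :=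
  ∀ (h : H) (x : X) (y : Y) (m : ℕ) (a b : Fin m → H),
    comul h = ∑ i, a i ⊗ₜ[R] b i → La h (x ⊗ₜ[R] y) = ∑ i, (a i • x) ⊗ₜ[R] (b i • y)

def diagonalCoinvariantRelations (La : H → X ⊗[R] Y →ₗ[R] X ⊗[R] Y) : Set (X ⊗[R] Y) :=
  {z | ∃ (h : H) (ζ : X ⊗[R] Y), z = counit (R := R) h • ζ - La h ζ}

variable (X Y) in
def balancingRelations (Sinv : H →ₗ[R] H) : Set (X ⊗[R] Y) :=
  {z | ∃ (h : H) (x : X) (y : Y), z = (Sinv h • x) ⊗ₜ[R] y - x ⊗ₜ[R] (h • y)}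

variable {La : H → X ⊗[R] Y →ₗ[R] X ⊗[R] Y} {Sinv : H →ₗ[R] H}

lemma IsDiagonalAction.apply_tmul {ι : Type*} (hLa : IsDiagonalAction La) {h : H}
    (r : Repr R h ι) (x : X) (y : Y) :
    La h (x ⊗ₜ[R] y) = ∑ i ∈ r.index, (r.left i • x) ⊗ₜ[R] (r.right i • y) := by
  rw [← Finset.sum_coe_sort, ← r.index.equivFin.symm.sum_comp]
  refine hLa h x y _ _ _ ?_
  rw [← r.eq, ← Finset.sum_coe_sort, ← r.index.equivFin.symm.sum_comp]

variable [IsScalarTower R H X]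

lemma counit_smul_sub_mem_span_balancingRelations (hl : Function.LeftInverse Sinv (antipode R))
    (hr : Function.RightInverse Sinv (antipode R)) (hLa : IsDiagonalAction La) (h : H)
    (ζ : X ⊗[R] Y) :
    counit (R := R) h • ζ - La h ζ ∈ Submodule.span R (balancingRelations X Y Sinv) := by
  induction ζ using TensorProduct.induction_on with
  | zero => simp
  | tmul x y =>
    let r := ℛ R h
    have hε : counit (R := R) h • x ⊗ₜ[R] y =
        ∑ i ∈ r.index, (Sinv (r.right i) • r.left i • x) ⊗ₜ[R] y := by
      simp only [smul_smul, ← TensorProduct.sum_tmul, ← Finset.sum_smul,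
        sum_inverseAntipode_mul hl hr, smul_assoc, one_smul, TensorProduct.smul_tmul']
    rw [hε, hLa.apply_tmul r, ← Finset.sum_sub_distrib]
    exact Submodule.sum_mem _ fun i _ ↦ Submodule.subset_span ⟨r.right i, r.left i • x, y, rfl⟩
  | add ζ ξ hζ hξ =>
    rw [map_add, smul_add, add_sub_add_comm]
    exact add_mem hζ hξ

lemma inverseAntipode_smul_tmul_sub_mem_span_diagonalCoinvariantRelations
    [IsScalarTower R H Y] (hl : Function.LeftInverse Sinv (antipode R))
    (hr : Function.RightInverse Sinv (antipode R)) (hLa : IsDiagonalAction La)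
    (h : H) (x : X) (y : Y) :
    (Sinv h • x) ⊗ₜ[R] y - x ⊗ₜ[R] (h • y) ∈
      Submodule.span R (diagonalCoinvariantRelations La) := by
  let r := ℛ R h
  have hε : ∑ i ∈ r.index, counit (R := R) (r.right i) • (Sinv (r.left i) • x) ⊗ₜ[R] y =
      (Sinv h • x) ⊗ₜ[R] y := by
    simp only [TensorProduct.smul_tmul', ← smul_assoc, ← map_smul, ← TensorProduct.sum_tmul,
      ← Finset.sum_smul, ← map_sum, sum_counit_right_smul_s18]
  have hact :
      ∑ i ∈ r.index, La (r.right i) ((Sinv (r.left i) • x) ⊗ₜ[R] y) = x ⊗ₜ[R] (h • y) := by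
    simpa only [map_sum, TensorProduct.map_tmul, LinearMap.smulRight_apply, LinearMap.id_apply,
      one_smul, smul_smul, hLa.apply_tmul (ℛ R _)] using
      congr(TensorProduct.map (LinearMap.id.smulRight x) (LinearMap.id.smulRight y)
        $(sum_sum_mul_inverseAntipode_tmul hl hr r fun i ↦ ℛ R (r.right i)))
  rw [← hε, ← hact, ← Finset.sum_sub_distrib]
  exact Submodule.sum_mem _ fun i _ ↦ Submodule.subset_span ⟨r.right i, _, rfl⟩

theorem span_diagonalCoinvariantRelations_eq [IsScalarTower R H Y]
    (hl : Function.LeftInverse Sinv (antipode R)) (hr : Function.RightInverse Sinv (antipode R))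
    (hLa : IsDiagonalAction La) :
    Submodule.span R (diagonalCoinvariantRelations La) =
      Submodule.span R (balancingRelations X Y Sinv) := by
  apply le_antisymm <;> rw [Submodule.span_le]
  · rintro _ ⟨h, ζ, rfl⟩
    exact counit_smul_sub_mem_span_balancingRelations hl hr hLa h ζ
  · rintro _ ⟨h, x, y, rfl⟩
    exact inverseAntipode_smul_tmul_sub_mem_span_diagonalCoinvariantRelations hl hr hLa h x y

end DiagonalAction

/-- `_H(X ⊗ Y) ≅ X^R ⊗_H Y`, where `X^R` is `X` with right action
`x·h := S⁻¹(h)·x`. -/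
theorem statement18
    {H : Type*} [Ring H] [HopfAlgebra k H]
    (Sinv : H →ₗ[k] H)
    (hSinv₁ : ∀ h : H, Sinv (HopfAlgebra.antipode (R := k) h) = h)
    (hSinv₂ : ∀ h : H, HopfAlgebra.antipode (R := k) (Sinv h) = h)
    {X : Type*} [AddCommGroup X] [Module k X] [Module H X] [IsScalarTower k H X]
    {Y : Type*} [AddCommGroup Y] [Module k Y] [Module H Y] [IsScalarTower k H Y]
    (La : H → X ⊗[k] Y →ₗ[k] X ⊗[k] Y)
    (hLa : ∀ (h : H) (x : X) (y : Y) (m : ℕ) (a b : Fin m → H),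
      Coalgebra.comul h = ∑ i, a i ⊗ₜ[k] b i →
      La h (x ⊗ₜ[k] y) = ∑ i, (a i • x) ⊗ₜ[k] (b i • y)) :
    ∀ (J₁ J₂ : Submodule k (X ⊗[k] Y)),
      J₁ = Submodule.span k
        {z | ∃ (h : H) (ζ : X ⊗[k] Y), z = Coalgebra.counit (R := k) h • ζ - La h ζ} →
      J₂ = Submodule.span k
        {z | ∃ (h : H) (x : X) (y : Y), z = (Sinv h • x) ⊗ₜ[k] y - x ⊗ₜ[k] (h • y)} →
      ∃ e : ((X ⊗[k] Y) ⧸ J₁) ≃ₗ[k] ((X ⊗[k] Y) ⧸ J₂),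
        ∀ ζ : X ⊗[k] Y, e (Submodule.Quotient.mk ζ) = Submodule.Quotient.mk ζ := by
  intro J₁ J₂ hJ₁ hJ₂
  have hJ : J₁ = J₂ := by
    rw [hJ₁, hJ₂]
    exact span_diagonalCoinvariantRelations_eq hSinv₁ hSinv₂ hLa
  exact ⟨Submodule.quotEquivOfEq J₁ J₂ hJ, fun ζ ↦ Submodule.quotEquivOfEq_mk J₁ J₂ hJ ζ⟩
end
end
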